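/- arXiv:2505.13991 — 3 statements merged into one kernel-verified Lean document; each statement's English description precedes it below -/
import Mathlib

section
/- For every ε with 0 < ε < 1 and every positive integer r, the sum of n^(−ε) over positive integers n with rad(n) = r is at most (2/ε)^(2^(1/ε)). -/
/-!
If `rad n = r` then `n = r * m` with `m` built from the primes dividing `r`, so by the Euler
product over those primes the sum is at most `r ^ (-ε) * ∏ p ∣ r, (1 - p ^ (-ε))⁻¹`, which is
`∏ p ∣ r, (p ^ ε - 1)⁻¹` because `r = rad r`. Since `2 ^ ε ≥ 1 + ε / 2`, each factor is at
most `2 / ε`, and it is at most `1` as soon as `p ≥ 2 ^ (1 / ε)`; at most `2 ^ (1 / ε)` primes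
lie below that bound.
-/

/-- The radical of a positive integer: the product of its distinct prime factors. -/
def rad (n : ℕ) : ℕ := n.primeFactors.prod id

open Finset

lemma primeFactors_rad (n : ℕ) : (rad n).primeFactors = n.primeFactors :=
  Nat.primeFactors_prod_primeFactors n

lemma rad_dvd (n : ℕ) : rad n ∣ n :=
  Nat.prod_primeFactors_dvd n

lemma rad_rad (n : ℕ) : rad (rad n) = rad n := by
  rw [rad, primeFactors_rad, rad]

lemma dvd_of_rad_eq {n r : ℕ} (h : rad n = r) : r ∣ n :=
  h ▸ rad_dvd n

lemma rad_eq_self_of_rad_eq {n r : ℕ} (h : rad n = r) : rad r = r :=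
  h ▸ rad_rad n

lemma div_mem_factoredNumbers_of_rad_eq {n r : ℕ} (hn : 0 < n) (h : rad n = r) :
    n / r ∈ Nat.factoredNumbers r.primeFactors := by
  refine Nat.mem_factoredNumbers_of_primeFactors_subset ?_ ?_
  · have hr := dvd_of_rad_eq h
    exact (Nat.div_pos (Nat.le_of_dvd hn hr) (Nat.pos_of_dvd_of_pos hr hn)).ne'
  · rw [← h, primeFactors_rad]
    exact Nat.primeFactors_mono (Nat.div_dvd_of_dvd (rad_dvd n)) hn.ne'

noncomputable def natRpowHom (s : ℝ) : ℕ →* ℝ where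
  toFun n := (n : ℝ) ^ s
  map_one' := by simp
  map_mul' m n := by simp [Real.mul_rpow]

lemma hasSum_factoredNumbers_rpow_neg {s : ℝ} (hs : 0 < s) (S : Finset ℕ) :
    HasSum (fun m : Nat.factoredNumbers S ↦ ((m : ℕ) : ℝ) ^ (-s))
      (∏ p ∈ S with p.Prime, (1 - (p : ℝ) ^ (-s))⁻¹) := by
  refine (EulerProduct.summable_and_hasSum_factoredNumbers_prod_filter_prime_geometric
    (f := natRpowHom (-s)) (fun {p} hp ↦ ?_) S).2
  change ‖(p : ℝ) ^ (-s)‖ < 1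
  rw [Real.norm_of_nonneg (by positivity)]
  exact Real.rpow_lt_one_of_one_lt_of_neg (by exact_mod_cast hp.one_lt) (neg_neg_of_pos hs)

lemma rpow_neg_mul_one_sub_rpow_neg_inv {x s : ℝ} (hx : 0 < x) :
    x ^ (-s) * (1 - x ^ (-s))⁻¹ = (x ^ s - 1)⁻¹ := by
  rw [Real.rpow_neg hx.le]
  field_simp

lemma inv_rpow_sub_one_nonneg {x s : ℝ} (hx : 1 ≤ x) (hs : 0 ≤ s) : 0 ≤ (x ^ s - 1)⁻¹ :=
  inv_nonneg.2 (sub_nonneg.2 (Real.one_le_rpow hx hs))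

lemma one_add_half_mul_le_two_rpow {s : ℝ} (hs : 0 ≤ s) : 1 + s / 2 ≤ (2 : ℝ) ^ s := by
  rw [Real.rpow_def_of_pos two_pos]
  have := Real.add_one_le_exp (Real.log 2 * s)
  nlinarith [Real.log_two_gt_d9]

lemma inv_rpow_sub_one_le_two_div {x s : ℝ} (hx : 2 ≤ x) (hs : 0 < s) :
    (x ^ s - 1)⁻¹ ≤ 2 / s := by
  have : 1 + s / 2 ≤ x ^ s :=
    (one_add_half_mul_le_two_rpow hs.le).trans (Real.rpow_le_rpow two_pos.le hx hs.le)
  rw [← inv_div]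
  exact inv_anti₀ (by positivity) (by linarith)

lemma inv_rpow_sub_one_le_one {x s : ℝ} (hx : 2 ^ (1 / s) ≤ x) (hs : 0 < s) :
    (x ^ s - 1)⁻¹ ≤ 1 := by
  have : 2 ≤ x ^ s := by
    calc (2 : ℝ) = (2 ^ (1 / s)) ^ s := by
          rw [← Real.rpow_mul two_pos.le, one_div_mul_cancel hs.ne', Real.rpow_one]
      _ ≤ x ^ s := Real.rpow_le_rpow (by positivity) hx hs.le
  exact inv_le_one_of_one_le₀ (by linarith)

lemma card_filter_cast_lt_le {S : Finset ℕ} (hS : 0 ∉ S) {X : ℝ} (hX : 0 ≤ X) :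
    (#(S.filter fun p : ℕ ↦ (p : ℝ) < X) : ℝ) ≤ X := by
  have hsub : (S.filter fun p : ℕ ↦ (p : ℝ) < X) ⊆ Icc 1 ⌊X⌋₊ := fun p hp ↦ by
    rw [mem_filter] at hp
    exact mem_Icc.2
      ⟨Nat.one_le_iff_ne_zero.2 (ne_of_mem_of_not_mem hp.1 hS), Nat.le_floor hp.2.le⟩
  calc (#(S.filter fun p : ℕ ↦ (p : ℝ) < X) : ℝ) ≤ ⌊X⌋₊ := by
        exact_mod_cast (card_le_card hsub).trans (Nat.card_Icc 1 _).le
    _ ≤ X := Nat.floor_le hX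

lemma prod_le_rpow_of_le_one_above {S : Finset ℕ} (hS : 0 ∉ S) {f : ℕ → ℝ} {C X : ℝ}
    (hX : 0 ≤ X) (hC : 1 ≤ C) (hf0 : ∀ p ∈ S, 0 ≤ f p) (hfC : ∀ p ∈ S, f p ≤ C)
    (hf1 : ∀ p ∈ S, X ≤ p → f p ≤ 1) :
    ∏ p ∈ S, f p ≤ C ^ X := by
  rw [← prod_filter_mul_prod_filter_not S (fun p : ℕ ↦ (p : ℝ) < X)]
  calc (∏ p ∈ S.filter fun p : ℕ ↦ (p : ℝ) < X, f p)
        * ∏ p ∈ S.filter fun p : ℕ ↦ ¬(p : ℝ) < X, f p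
      ≤ C ^ #(S.filter fun p : ℕ ↦ (p : ℝ) < X) * 1 := by
        gcongr
        · exact prod_nonneg fun p hp ↦ hf0 p (mem_filter.1 hp).1
        · exact (prod_le_prod (fun p hp ↦ hf0 p (mem_filter.1 hp).1)
            fun p hp ↦ hfC p (mem_filter.1 hp).1).trans_eq (prod_const C)
        · exact prod_le_one (fun p hp ↦ hf0 p (mem_filter.1 hp).1)
            fun p hp ↦ hf1 p (mem_filter.1 hp).1 (not_lt.1 (mem_filter.1 hp).2)
    _ ≤ C ^ X := by
        rw [mul_one, ← Real.rpow_natCast]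
        exact Real.rpow_le_rpow_of_exponent_le hC (card_filter_cast_lt_le hS hX)

lemma tsum_rpow_neg_of_rad_eq_le_prod {s : ℝ} (hs : 0 < s) (r : ℕ) :
    ∑' n : {n : ℕ // 0 < n ∧ rad n = r}, ((n : ℕ) : ℝ) ^ (-s)
      ≤ ∏ p ∈ r.primeFactors, ((p : ℝ) ^ s - 1)⁻¹ := by
  rcases isEmpty_or_nonempty {n : ℕ // 0 < n ∧ rad n = r} with _ | ⟨⟨n₀, -, hn₀⟩⟩
  · rw [tsum_empty]
    refine prod_nonneg fun p hp ↦ inv_rpow_sub_one_nonneg ?_ hs.le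
    exact_mod_cast (Nat.prime_of_mem_primeFactors hp).one_le
  let g (n : {n : ℕ // 0 < n ∧ rad n = r}) : Nat.factoredNumbers r.primeFactors :=
    ⟨n / r, div_mem_factoredNumbers_of_rad_eq n.2.1 n.2.2⟩
  have hdvd (n : {n : ℕ // 0 < n ∧ rad n = r}) : r ∣ n := dvd_of_rad_eq n.2.2
  have hg : Function.Injective g := fun n m h ↦
    Subtype.ext ((Nat.div_left_inj (hdvd n) (hdvd m)).1 (congrArg Subtype.val h))
  have hfactor (n : {n : ℕ // 0 < n ∧ rad n = r}) :
      ((n : ℕ) : ℝ) ^ (-s) = (r : ℝ) ^ (-s) * ((g n : ℕ) : ℝ) ^ (-s) := by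
    rw [← Real.mul_rpow (by positivity) (by positivity), ← Nat.cast_mul,
      Nat.mul_div_cancel' (hdvd n)]
  have hsum := hasSum_factoredNumbers_rpow_neg hs r.primeFactors
  have hrad : (r : ℝ) = ∏ p ∈ r.primeFactors, (p : ℝ) := by
    nth_rw 1 [← rad_eq_self_of_rad_eq hn₀]
    exact Nat.cast_prod _ _
  have hprime : {p ∈ r.primeFactors | p.Prime} = r.primeFactors :=
    filter_true_of_mem fun _ ↦ Nat.prime_of_mem_primeFactors
  calc ∑' n : {n : ℕ // 0 < n ∧ rad n = r}, ((n : ℕ) : ℝ) ^ (-s)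
      = (r : ℝ) ^ (-s) * ∑' n, ((g n : ℕ) : ℝ) ^ (-s) := by
        simp_rw [hfactor]
        exact tsum_mul_left
    _ ≤ (r : ℝ) ^ (-s) * ∑' m : Nat.factoredNumbers r.primeFactors, ((m : ℕ) : ℝ) ^ (-s) := by
        gcongr
        exact tsum_comp_le_tsum_of_inj hsum.summable (fun _ ↦ by positivity) hg
    _ = ∏ p ∈ r.primeFactors, ((p : ℝ) ^ s - 1)⁻¹ := by
        rw [hsum.tsum_eq, hprime, hrad, ← Real.finsetProd_rpow _ _ fun _ _ ↦ by positivity,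
          ← prod_mul_distrib]
        refine prod_congr rfl fun p hp ↦ rpow_neg_mul_one_sub_rpow_neg_inv ?_
        exact_mod_cast (Nat.prime_of_mem_primeFactors hp).pos

theorem tsum_rad_le_general (ε : ℝ) (hε0 : 0 < ε) (hε1 : ε < 1) (r : ℕ) :
    ∑' n : {n : ℕ // 0 < n ∧ rad n = r}, ((n : ℕ) : ℝ) ^ (-ε)
      ≤ (2 / ε) ^ ((2 : ℝ) ^ (1 / ε)) := by
  have two_le {p : ℕ} (hp : p ∈ r.primeFactors) : (2 : ℝ) ≤ p := by
    exact_mod_cast (Nat.prime_of_mem_primeFactors hp).two_le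
  refine (tsum_rpow_neg_of_rad_eq_le_prod hε0 r).trans <|
    prod_le_rpow_of_le_one_above (fun h ↦ Nat.not_prime_zero (Nat.prime_of_mem_primeFactors h))
      (by positivity) ((one_le_div hε0).2 (by linarith))
      (fun p hp ↦ inv_rpow_sub_one_nonneg (by linarith [two_le hp]) hε0.le)
      (fun p hp ↦ inv_rpow_sub_one_le_two_div (two_le hp) hε0)
      (fun p _ hpX ↦ inv_rpow_sub_one_le_one hpX hε0)

theorem tsum_rad_le (ε : ℝ) (hε0 : 0 < ε) (hε1 : ε < 1) (r : ℕ) (hr : 0 < r) :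
    ∑' n : {n : ℕ // 0 < n ∧ rad n = r}, ((n : ℕ) : ℝ) ^ (-ε)
      ≤ (2 / ε) ^ ((2 : ℝ) ^ (1 / ε)) :=
  tsum_rad_le_general ε hε0 hε1 r
end

section
/- For every ε > 0 there exists C_ε > 0 such that for all N ≥ 1 and all real λ ∈ [0,1], the number of positive integers n ≤ N with rad(n) ≤ N^λ is at most C_ε · N^(λ+ε). -/
/-!
Fix `k ≥ 1`. Sorting the primes of `n` by the residue of their exponent modulo `k` writes
`n = a₀⁰ a₁¹ ⋯ a_{k-1}^{k-1} · b^k` with `a₀ a₁ ⋯ a_{k-1} = rad n`. So every `n ≤ N` with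
`rad n ≤ R` comes from a `k`-tuple of positive integers with product at most `R` and from some
`b ≤ N^{1/k}`. By Rankin's trick there are at most `R (1 + log N)^k` such tuples, so the count is
at most `R (1 + log N)^k N^{1/k}`; taking `k ≥ 2/ε` makes both the logarithmic factor and
`N^{1/k}` at most a constant times `N^{ε/2}`.
-/

open Finset Real

def radExpMod (k i n : ℕ) : ℕ := ∏ p ∈ n.primeFactors with n.factorization p % k = i, p

/-- The largest `b` with `b ^ k ∣ n`. -/
def rootPart (k n : ℕ) : ℕ := ∏ p ∈ n.primeFactors, p ^ (n.factorization p / k)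

section Decomposition

variable {k n : ℕ}

lemma radExpMod_pos (k i n : ℕ) : 0 < radExpMod k i n :=
  prod_pos fun _ hp => (Nat.prime_of_mem_primeFactors (mem_filter.mp hp).1).pos

lemma rootPart_pos (k n : ℕ) : 0 < rootPart k n :=
  prod_pos fun _ hp => pow_pos (Nat.prime_of_mem_primeFactors hp).pos _

lemma radExpMod_dvd (k i n : ℕ) : radExpMod k i n ∣ n :=
  (prod_dvd_prod_of_subset _ _ id (filter_subset _ _)).trans n.prod_primeFactors_dvd

lemma prod_radExpMod (hk : 0 < k) : ∏ i ∈ range k, radExpMod k i n = rad n :=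
  prod_fiberwise_of_maps_to (fun _ _ => mem_range.mpr (Nat.mod_lt _ hk)) id

lemma prod_radExpMod_pow_mul_rootPart_pow (hk : 0 < k) (hn : n ≠ 0) :
    (∏ i ∈ range k, radExpMod k i n ^ i) * rootPart k n ^ k = n := by
  have hrad : ∏ i ∈ range k, radExpMod k i n ^ i =
      ∏ p ∈ n.primeFactors, p ^ (n.factorization p % k) := by
    rw [← prod_fiberwise_of_maps_to (fun _ _ => mem_range.mpr (Nat.mod_lt _ hk))
      fun p => p ^ (n.factorization p % k)]
    refine prod_congr rfl fun i _ => ?_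
    rw [radExpMod, ← prod_pow]
    exact prod_congr rfl fun p hp => by rw [(mem_filter.mp hp).2]
  have hroot : rootPart k n ^ k = ∏ p ∈ n.primeFactors, p ^ (k * (n.factorization p / k)) := by
    rw [rootPart, ← prod_pow]
    exact prod_congr rfl fun p _ => by rw [← pow_mul, mul_comm]
  rw [hrad, hroot, ← prod_mul_distrib]
  conv_rhs => rw [Nat.prod_primeFactors_pow_factorization hn]
  exact prod_congr rfl fun p _ => by rw [← pow_add, Nat.mod_add_div]

end Decomposition

/-- Rankin's trick: each tuple counted contributes `R / ∏ i, f i ≥ 1` to `R * (∑_{a ≤ N} 1/a)^j`. -/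
theorem card_filter_prod_le (j N : ℕ) {R : ℝ} (hR : 0 ≤ R) :
    (#{f ∈ Fintype.piFinset fun _ : Fin j => Icc 1 N | ∏ i, (f i : ℝ) ≤ R} : ℝ) ≤
      R * (1 + log N) ^ j := by
  have hprod_pos : ∀ f ∈ Fintype.piFinset fun _ : Fin j => Icc 1 N, 0 < ∏ i, (f i : ℝ) :=
    fun f hf => prod_pos fun i _ => by
      have := (mem_Icc.mp (Fintype.mem_piFinset.mp hf i)).1
      positivity
  calc (#{f ∈ Fintype.piFinset fun _ : Fin j => Icc 1 N | ∏ i, (f i : ℝ) ≤ R} : ℝ)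
      ≤ ∑ f ∈ Fintype.piFinset fun _ : Fin j => Icc 1 N with ∏ i, (f i : ℝ) ≤ R,
          R / ∏ i, (f i : ℝ) := by
        rw [card_eq_sum_ones, Nat.cast_sum, Nat.cast_one]
        refine sum_le_sum fun f hf => ?_
        obtain ⟨hf, hfR⟩ := mem_filter.mp hf
        exact (one_le_div (hprod_pos f hf)).mpr hfR
    _ ≤ ∑ f ∈ Fintype.piFinset fun _ : Fin j => Icc 1 N, R / ∏ i, (f i : ℝ) :=
        sum_le_sum_of_subset_of_nonneg (filter_subset _ _)
          fun f hf _ => div_nonneg hR (hprod_pos f hf).le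
    _ = R * (∑ a ∈ Icc 1 N, (a : ℝ)⁻¹) ^ j := by
        rw [← Fin.prod_const, prod_univ_sum]
        simp only [div_eq_mul_inv, ← mul_sum, prod_inv_distrib]
    _ ≤ R * (1 + log N) ^ j := by
        gcongr
        simpa [harmonic_eq_sum_Icc] using harmonic_le_one_add_log N

lemma le_floor_rpow_inv_of_pow_le {b k N : ℕ} (hk : 0 < k) (h : b ^ k ≤ N) :
    b ≤ ⌊(N : ℝ) ^ (k : ℝ)⁻¹⌋₊ := by
  refine Nat.le_floor ((le_rpow_inv_iff_of_pos (by positivity) (by positivity)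
    (by exact_mod_cast hk)).mpr ?_)
  rw [rpow_natCast]
  exact_mod_cast h

theorem card_filter_rad_le (N : ℕ) {k : ℕ} (hk : 0 < k) {R : ℝ} (hR : 0 ≤ R) :
    (#{n ∈ Icc 1 N | (rad n : ℝ) ≤ R} : ℝ) ≤ R * (1 + log N) ^ k * (N : ℝ) ^ (k : ℝ)⁻¹ := by
  set T := {f ∈ Fintype.piFinset fun _ : Fin k => Icc 1 N | ∏ i, (f i : ℝ) ≤ R}
  set B := Icc 1 ⌊(N : ℝ) ^ (k : ℝ)⁻¹⌋₊
  have hsub : {n ∈ Icc 1 N | (rad n : ℝ) ≤ R} ⊆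
      (T ×ˢ B).image fun ab => (∏ i : Fin k, ab.1 i ^ (i : ℕ)) * ab.2 ^ k := by
    intro n hn
    obtain ⟨hnN, hrad⟩ := mem_filter.mp hn
    obtain ⟨hn1, hnN⟩ := mem_Icc.mp hnN
    have hn0 : n ≠ 0 := by omega
    refine mem_image.mpr ⟨(fun i => radExpMod k i n, rootPart k n), mem_product.mpr ⟨?_, ?_⟩, ?_⟩
    · refine mem_filter.mpr ⟨Fintype.mem_piFinset.mpr fun i => mem_Icc.mpr
        ⟨radExpMod_pos _ _ _, (Nat.le_of_dvd (by omega) (radExpMod_dvd _ _ _)).trans hnN⟩, ?_⟩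
      rw [← Nat.cast_prod, Fin.prod_univ_eq_prod_range (fun i => radExpMod k i n),
        prod_radExpMod hk]
      exact hrad
    · have hroot : rootPart k n ^ k ∣ n :=
        Dvd.intro_left _ (prod_radExpMod_pow_mul_rootPart_pow hk hn0)
      exact mem_Icc.mpr ⟨rootPart_pos _ _,
        le_floor_rpow_inv_of_pow_le hk ((Nat.le_of_dvd (by omega) hroot).trans hnN)⟩
    · exact (congrArg (· * rootPart k n ^ k) (Fin.prod_univ_eq_prod_range _ k)).trans
        (prod_radExpMod_pow_mul_rootPart_pow hk hn0)
  have hB : (#B : ℝ) ≤ (N : ℝ) ^ (k : ℝ)⁻¹ := by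
    rw [Nat.card_Icc, Nat.add_sub_cancel]
    exact Nat.floor_le (by positivity)
  calc (#{n ∈ Icc 1 N | (rad n : ℝ) ≤ R} : ℝ) ≤ #(T ×ˢ B) := by
        exact_mod_cast (card_le_card hsub).trans card_image_le
    _ = #T * #B := by rw [card_product, Nat.cast_mul]
    _ ≤ R * (1 + log N) ^ k * (N : ℝ) ^ (k : ℝ)⁻¹ := by
        gcongr
        exact card_filter_prod_le k N hR

lemma one_add_log_pow_le {x ε : ℝ} (hx : 1 ≤ x) (hε : 0 < ε) {k : ℕ} (hk : 0 < k) :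
    (1 + log x) ^ k ≤ (1 + k / ε) ^ k * x ^ ε := by
  set δ := ε / k
  have hδ : 0 < δ := by positivity
  have hxδ : 1 ≤ x ^ δ := one_le_rpow hx hδ.le
  have hlog : 1 + log x ≤ (1 + k / ε) * x ^ δ := by
    have := log_le_rpow_div (x := x) (by linarith) hδ
    rw [show k / ε = 1 / δ by simp [δ]]
    calc 1 + log x ≤ x ^ δ + x ^ δ / δ := by linarith
      _ = (1 + 1 / δ) * x ^ δ := by ring
  calc (1 + log x) ^ k ≤ ((1 + k / ε) * x ^ δ) ^ k :=
        pow_le_pow_left₀ (add_nonneg zero_le_one (log_nonneg hx)) hlog k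
    _ = (1 + k / ε) ^ k * x ^ ε := by
        rw [mul_pow, ← rpow_mul_natCast (by linarith), div_mul_cancel₀ _ (by positivity)]

theorem card_rad_le_pow (ε : ℝ) (hε : 0 < ε) :
    ∃ C : ℝ, 0 < C ∧ ∀ N : ℕ, 1 ≤ N → ∀ lam : ℝ, 0 ≤ lam → lam ≤ 1 →
      (((Finset.Icc 1 N).filter (fun n => (rad n : ℝ) ≤ (N : ℝ) ^ lam)).card : ℝ)
        ≤ C * (N : ℝ) ^ (lam + ε) := by
  set k := ⌈2 / ε⌉₊
  have hk : 0 < k := Nat.ceil_pos.mpr (by positivity)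
  have hkε : (k : ℝ)⁻¹ ≤ ε / 2 := by
    rw [inv_le_comm₀ (by positivity) (by positivity), inv_div]
    exact Nat.le_ceil _
  refine ⟨(1 + k / (ε / 2)) ^ k, by positivity, fun N hN lam _ _ => ?_⟩
  have hN1 : (1 : ℝ) ≤ N := by exact_mod_cast hN
  calc _ ≤ (N : ℝ) ^ lam * (1 + log N) ^ k * (N : ℝ) ^ (k : ℝ)⁻¹ :=
        card_filter_rad_le N hk (by positivity)
    _ ≤ (N : ℝ) ^ lam * ((1 + k / (ε / 2)) ^ k * (N : ℝ) ^ (ε / 2)) * (N : ℝ) ^ (ε / 2) := by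
        gcongr
        exact one_add_log_pow_le hN1 (by positivity) hk
    _ = (1 + k / (ε / 2)) ^ k * (N : ℝ) ^ (lam + ε) := by
        rw [show lam + ε = lam + ε / 2 + ε / 2 by ring, rpow_add (by positivity),
          rpow_add (by positivity)]
        ring
end

section
/- There exists a constant A > 0 such that τ(n) ≤ n^(A/log log n) for all integers n ≥ 3. -/
/-!
Write `log τ(n) = ∑_{p^a ∥ n} log (a + 1)` and split the primes at `y = log n / (log log n)²`.
There are at most `y` primes `p ≤ y`, each with `a ≤ log n / log 2`, so together they contribute
`O(y log log n) = O(log n / log log n)`. For `p > y` we have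
`log (a + 1) ≤ a log 2 ≤ (log 2 / log y) · a log p`, and `∑ a log p = log n`, so these contribute
`O(log n / log y) = O(log n / log log n)`. Once `log log n ≥ 64` this gives
`τ(n) ≤ n ^ (4 / log log n)`; below that the trivial bound `τ(n) ≤ n` suffices.
-/

open Real Finset

lemma Finset.card_filter_natCast_le_le {s : Finset ℕ} (hs : ∀ p ∈ s, 0 < p) {y : ℝ}
    (hy : 0 ≤ y) : (#(s.filter fun p : ℕ => (p : ℝ) ≤ y) : ℝ) ≤ y := by
  have hsub : s.filter (fun p : ℕ => (p : ℝ) ≤ y) ⊆ Icc 1 ⌊y⌋₊ := fun p hp => by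
    rw [mem_filter] at hp
    exact mem_Icc.2 ⟨hs p hp.1, Nat.le_floor hp.2⟩
  calc (#(s.filter fun p : ℕ => (p : ℝ) ≤ y) : ℝ) ≤ #(Icc 1 ⌊y⌋₊) := by
        exact_mod_cast card_le_card hsub
    _ = ⌊y⌋₊ := by simp
    _ ≤ y := Nat.floor_le hy

lemma Real.log_natCast_add_one_le (a : ℕ) : log (a + 1) ≤ a * log 2 := by
  rw [← log_pow]
  exact log_le_log (by positivity) (by exact_mod_cast Nat.lt_two_pow_self (n := a))

lemma Real.log_natCast_add_one_le_of_lt (a : ℕ) {p y : ℝ} (hy : 1 < y) (hyp : y < p) :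
    log (a + 1) ≤ log 2 / log y * (a * log p) := by
  have hlogy : 0 < log y := log_pos hy
  calc log (a + 1) ≤ a * log 2 := log_natCast_add_one_le a
    _ = log 2 / log y * (a * log y) := by field_simp
    _ ≤ log 2 / log y * (a * log p) := by gcongr

lemma Real.four_mul_log_le_self {x : ℝ} (hx : 64 ≤ x) : 4 * log x ≤ x := by
  have hlog : log x ≤ 2 * √x := by
    simpa [sqrt_eq_rpow, div_eq_mul_inv, mul_comm] using
      log_le_rpow_div (x := x) (by linarith) (by norm_num : (0 : ℝ) < 1 / 2)
  have h8 : 8 ≤ √x := le_sqrt_of_sq_le (by linarith)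
  nlinarith [sq_sqrt (show 0 ≤ x by linarith)]

lemma Nat.factorization_le_log_div_log_two (n p : ℕ) :
    (n.factorization p : ℝ) ≤ Real.log n / Real.log 2 := by
  rcases eq_or_ne n 0 with rfl | hn
  · simp
  by_cases hp : p.Prime
  · rw [le_div_iff₀ (Real.log_pos one_lt_two)]
    refine Real.le_log_of_pow_le two_pos ?_
    calc (2 : ℝ) ^ n.factorization p ≤ (p : ℝ) ^ n.factorization p := by
          gcongr; exact_mod_cast hp.two_le
      _ ≤ n := by exact_mod_cast Nat.le_of_dvd (Nat.pos_of_ne_zero hn) (Nat.ordProj_dvd n p)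
  · simp only [Nat.factorization_eq_zero_of_not_prime n hp, Nat.cast_zero]
    positivity

lemma Nat.log_card_divisors_le (n : ℕ) {y : ℝ} (hy : 1 < y) :
    Real.log #n.divisors ≤
      y * Real.log (Real.log n / Real.log 2 + 1) + Real.log 2 / Real.log y * Real.log n := by
  rcases eq_or_ne n 0 with rfl | hn
  · simp
  set a := n.factorization
  set S := n.primeFactors.filter fun p : ℕ => (p : ℝ) ≤ y
  set T := n.primeFactors.filter fun p : ℕ => ¬(p : ℝ) ≤ y
  have hlog_card : Real.log #n.divisors = ∑ p ∈ n.primeFactors, Real.log (a p + 1) := by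
    rw [Nat.card_divisors hn, Nat.cast_prod, Real.log_prod fun p _ => by positivity]
    push_cast; rfl
  have hlog_n : Real.log n = ∑ p ∈ n.primeFactors, a p * Real.log p := by
    rw [Real.log_nat_eq_sum_factorization, Finsupp.sum, n.support_factorization]
  have hsmall : ∑ p ∈ S, Real.log (a p + 1)
      ≤ y * Real.log (Real.log n / Real.log 2 + 1) := by
    have hB : 0 ≤ Real.log (Real.log n / Real.log 2 + 1) := Real.log_nonneg (by
      have : 0 ≤ Real.log n / Real.log 2 := by positivity
      linarith)
    calc ∑ p ∈ S, Real.log (a p + 1)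
        ≤ ∑ _p ∈ S, Real.log (Real.log n / Real.log 2 + 1) :=
          sum_le_sum fun p _ => Real.log_le_log (by positivity) <| by
            linarith [factorization_le_log_div_log_two n p]
      _ ≤ y * Real.log (Real.log n / Real.log 2 + 1) := by
          rw [sum_const, nsmul_eq_mul]
          gcongr
          exact card_filter_natCast_le_le (fun p hp => (prime_of_mem_primeFactors hp).pos)
            (by linarith)
  have hlarge : ∑ p ∈ T, Real.log (a p + 1)
      ≤ Real.log 2 / Real.log y * Real.log n := by
    rw [hlog_n, mul_sum]
    refine (sum_le_sum fun p hp => Real.log_natCast_add_one_le_of_lt (a p) hy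
      (not_le.1 (mem_filter.1 hp).2)).trans ?_
    refine sum_le_sum_of_subset_of_nonneg (filter_subset _ _) fun p _ _ => ?_
    have := Real.log_pos hy
    positivity
  rw [hlog_card, ← sum_filter_add_sum_filter_not _ fun p : ℕ => (p : ℝ) ≤ y]
  exact _root_.add_le_add hsmall hlarge

lemma Nat.card_divisors_le_rpow_of_le_log_log {n : ℕ} (h : 64 ≤ Real.log (Real.log n)) :
    (#n.divisors : ℝ) ≤ (n : ℝ) ^ (4 / Real.log (Real.log n)) := by
  set L := Real.log n
  set k := Real.log L
  have hL : 0 < L := by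
    by_contra! hL
    linarith [Real.log_nonpos (Real.log_natCast_nonneg n) (hL.trans zero_le_one)]
  have hn : n ≠ 0 := by rintro rfl; simp [L] at hL
  have hkL : k + 1 ≤ L := by linarith [Real.log_le_sub_one_of_pos hL]
  have hk : 0 < k := by linarith
  set y := L / k ^ 2
  have hlog_y : k / 2 ≤ Real.log y := by
    rw [Real.log_div hL.ne' (by positivity), Real.log_pow]
    linarith [Real.four_mul_log_le_self h]
  have hy : 1 < y := (Real.log_pos_iff (by positivity)).1 (by linarith)
  have hlog_a : Real.log (L / Real.log 2 + 1) ≤ 2 * k := by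
    have hL2 : L / Real.log 2 ≤ 2 * L := by
      rw [div_le_iff₀ (Real.log_pos one_lt_two)]
      nlinarith [Real.log_two_gt_d9]
    calc Real.log (L / Real.log 2 + 1) ≤ Real.log (L ^ 2) :=
          Real.log_le_log (by positivity) (by nlinarith)
      _ = 2 * k := by rw [Real.log_pow]; push_cast; rfl
  have hlog_card : Real.log #n.divisors ≤ 4 / k * L :=
    calc Real.log #n.divisors
        ≤ y * Real.log (L / Real.log 2 + 1) + Real.log 2 / Real.log y * L :=
          log_card_divisors_le n hy
      _ ≤ y * (2 * k) + 1 / (k / 2) * L := by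
          gcongr
          linarith [Real.log_two_lt_d9]
      _ = 4 / k * L := by simp only [y]; field_simp; ring
  rwa [Real.le_rpow_iff_log_le (by simpa [Finset.card_pos] using hn) (by positivity)]

theorem divisor_bound_loglog :
    ∃ A : ℝ, 0 < A ∧ ∀ n : ℕ, 3 ≤ n →
      (n.divisors.card : ℝ) ≤ (n : ℝ) ^ (A / Real.log (Real.log n)) := by
  refine ⟨64, by norm_num, fun n hn => ?_⟩
  have hn1 : (1 : ℝ) ≤ n := by exact_mod_cast (by omega : 1 ≤ n)
  have hk : 0 < Real.log (Real.log n) := by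
    refine Real.log_pos ((Real.lt_log_iff_exp_lt (by linarith)).2 ?_)
    have : (3 : ℝ) ≤ n := by exact_mod_cast hn
    linarith [Real.exp_one_lt_d9]
  rcases le_total (Real.log (Real.log n)) 64 with hsmall | hlarge
  · calc (n.divisors.card : ℝ) ≤ n := by exact_mod_cast Nat.card_divisors_le_self n
      _ = (n : ℝ) ^ (1 : ℝ) := (Real.rpow_one _).symm
      _ ≤ (n : ℝ) ^ (64 / Real.log (Real.log n)) :=
          Real.rpow_le_rpow_of_exponent_le hn1 ((one_le_div hk).2 hsmall)
  · calc (n.divisors.card : ℝ) ≤ (n : ℝ) ^ (4 / Real.log (Real.log n)) :=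
          Nat.card_divisors_le_rpow_of_le_log_log hlarge
      _ ≤ (n : ℝ) ^ (64 / Real.log (Real.log n)) :=
          Real.rpow_le_rpow_of_exponent_le hn1 (by gcongr; norm_num)
end
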